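/- arXiv:1001.1679 — 6 statements merged into one kernel-verified Lean document; each statement's English description precedes it below -/
import Mathlib

section
/- (Theorem 2, Case 2 of the cascade Gaussian optimization.) Assume D₂·(sX + sZ) ≤ sX·sZ, sX < r·D₂, and r·D₂·(sX·sZ − D₂·sZ − D₂·sX) ≤ sX·sZ·(sX − D₂). Then, setting α := ( √( sZ·(sX − D₂) / (sX·(D₂ − sX/r)) ) − 1 )⁻¹, the number s* := sZ·sX·α² / (r·D₂ − sX) is the greatest element of the feasible set F, i.e. IsGreatest F s*. -/
/-!
Write `K = sX sZ - D₂ (sX + sZ) ≥ 0`, `c(β) = (1 + β)² sX + β² sZ` and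
`g(β) = -K β² + 2 β sX D₂ + D₂ sX`, so that `s > 0` is feasible iff `c(β) ≤ (r - 1) s` and
`(sX - D₂) s ≤ g(β)` for some `β`. Since `1 + α = α √Q` for the radicand `Q`, the chosen `α`
satisfies `(1 + α)² sX (r D₂ - sX) = r α² sZ (sX - D₂)`, which makes both constraints tight
at `(s*, α)`.
Optimality is weak Lagrangian duality: with the multipliers `w = (sX + sZ) α + sX` and
`μ = sX D₂ - K α` the concave quadratic `w g - μ c` is maximal at `α`; the hypothesis on
`r D₂ (sX sZ - D₂ sZ - D₂ sX)` is exactly `μ ≥ 0`.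
-/

/-- The feasible set of the cascade Gaussian optimization problem. -/
def feasible (sX sZ D₂ r : ℝ) : Set ℝ :=
  {s : ℝ | 0 < s ∧ ∃ α : ℝ,
    (r - 1) * s ≥ (1 + α) ^ 2 * sX + α ^ 2 * sZ ∧
    s * (sX - D₂) ≤ α ^ 2 * (sX * D₂ + sZ * D₂ - sX * sZ) + 2 * α * sX * D₂ + D₂ * sX}

theorem le_of_mem_feasible {sX sZ D₂ r α s t : ℝ}
    (hsX : 0 ≤ sX) (hsZ : 0 ≤ sZ) (hα : 0 ≤ α)
    (hK : D₂ * (sX + sZ) ≤ sX * sZ)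
    (hμ : (sX * sZ - D₂ * (sX + sZ)) * α ≤ sX * D₂)
    (hcoef : 0 < ((sX + sZ) * α + sX) * (sX - D₂)
      - (sX * D₂ - (sX * sZ - D₂ * (sX + sZ)) * α) * (r - 1))
    (hA : (r - 1) * t = (1 + α) ^ 2 * sX + α ^ 2 * sZ)
    (hB : t * (sX - D₂)
      = α ^ 2 * (sX * D₂ + sZ * D₂ - sX * sZ) + 2 * α * sX * D₂ + D₂ * sX)
    (hs : s ∈ feasible sX sZ D₂ r) : s ≤ t := by
  obtain ⟨-, β, hβA, hβB⟩ := hs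
  have hw : 0 ≤ (sX + sZ) * α + sX := by positivity
  have hconc : 0 ≤ ((sX + sZ) * α + sX) * (sX * sZ - D₂ * (sX + sZ))
      + (sX * D₂ - (sX * sZ - D₂ * (sX + sZ)) * α) * (sX + sZ) :=
    add_nonneg (mul_nonneg hw (by linarith)) (mul_nonneg (by linarith) (by linarith))
  refine le_of_mul_le_mul_left ?_ hcoef
  linear_combination ((sX + sZ) * α + sX) * (hβB - hB)
    + (sX * D₂ - (sX * sZ - D₂ * (sX + sZ)) * α) * hA
    + mul_le_mul_of_nonneg_left hβA (sub_nonneg.2 hμ) + mul_nonneg hconc (sq_nonneg (β - α))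

theorem one_add_inv_sqrt_sub_one_sq {Q : ℝ} (hQ : 0 ≤ Q) (h1 : √Q ≠ 1) :
    (1 + (√Q - 1)⁻¹) ^ 2 = Q * ((√Q - 1)⁻¹) ^ 2 := by
  have : √Q - 1 ≠ 0 := sub_ne_zero.2 h1
  field_simp
  rw [sub_add_cancel, Real.sq_sqrt hQ]

theorem feasible_constraints_eq {sX sZ D₂ r α : ℝ} (hden : r * D₂ - sX ≠ 0)
    (hrel : (1 + α) ^ 2 * (sX * (r * D₂ - sX)) = r * α ^ 2 * (sZ * (sX - D₂))) :
    (r - 1) * (sZ * sX * α ^ 2 / (r * D₂ - sX)) = (1 + α) ^ 2 * sX + α ^ 2 * sZ ∧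
      sZ * sX * α ^ 2 / (r * D₂ - sX) * (sX - D₂)
        = α ^ 2 * (sX * D₂ + sZ * D₂ - sX * sZ) + 2 * α * sX * D₂ + D₂ * sX := by
  constructor
  · rw [mul_div_assoc', div_eq_iff hden]
    linear_combination -hrel
  · rw [div_mul_eq_mul_div, div_eq_iff hden]
    linear_combination -D₂ * hrel

theorem isGreatest_feasible {sX sZ D₂ r α : ℝ} (hsX : 0 < sX) (hsZ : 0 < sZ)
    (hD₂ : 0 ≤ D₂) (hα : 0 < α) (h1 : D₂ * (sX + sZ) ≤ sX * sZ) (h2 : sX < r * D₂)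
    (h3 : r * D₂ * (sX * sZ - D₂ * sZ - D₂ * sX) ≤ sX * sZ * (sX - D₂))
    (hrel : (1 + α) ^ 2 * (sX * (r * D₂ - sX)) = r * α ^ 2 * (sZ * (sX - D₂))) :
    IsGreatest (feasible sX sZ D₂ r) (sZ * sX * α ^ 2 / (r * D₂ - sX)) := by
  have hden : 0 < r * D₂ - sX := sub_pos.2 h2
  have hD₂X : D₂ < sX := by nlinarith
  obtain ⟨hA, hB⟩ := feasible_constraints_eq hden.ne' hrel
  refine ⟨⟨by positivity, α, hA.ge, hB.le⟩, fun s hs => ?_⟩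
  refine le_of_mem_feasible hsX.le hsZ.le hα.le h1 ?_ ?_ hA hB hs
  · have hsq : (sZ * (sX - D₂) * α) ^ 2 ≤ (sX * D₂ * (1 + α)) ^ 2 := by
      refine le_of_mul_le_mul_right ?_ (mul_pos hsX hden)
      have hw : 0 ≤ sZ * (sX - D₂) * α ^ 2 * sX := by positivity
      linear_combination mul_le_mul_of_nonneg_left h3 hw - sX ^ 2 * D₂ ^ 2 * hrel
    nlinarith [le_of_pow_le_pow_left₀ two_ne_zero (by positivity) hsq]
  · have hprod : α * (((sX + sZ) * α + sX) * (sX - D₂)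
        - (sX * D₂ - (sX * sZ - D₂ * (sX + sZ)) * α) * (r - 1))
        = (1 + α) * (sX * (r * D₂ - sX)) := by
      linear_combination -hrel
    exact pos_of_mul_pos_right (hprod ▸ by positivity) hα.le

theorem cascade_gaussian_case2_general (sX sZ D₂ r : ℝ)
    (hsX : 0 < sX) (hsZ : 0 < sZ) (hr : 1 < r)
    (h1 : D₂ * (sX + sZ) ≤ sX * sZ)
    (h2 : sX < r * D₂)
    (h3 : r * D₂ * (sX * sZ - D₂ * sZ - D₂ * sX) ≤ sX * sZ * (sX - D₂)) :
    IsGreatest (feasible sX sZ D₂ r)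
      (sZ * sX * ((Real.sqrt (sZ * (sX - D₂) / (sX * (D₂ - sX / r))) - 1)⁻¹) ^ 2
        / (r * D₂ - sX)) := by
  have hr₀ : 0 < r := by linarith
  have hsX_div : sX / r < D₂ := (div_lt_iff₀' hr₀).2 h2
  have hD₂ : 0 < D₂ := (div_pos hsX hr₀).trans hsX_div
  set Q := sZ * (sX - D₂) / (sX * (D₂ - sX / r)) with hQ_def
  have hden : 0 < sX * (D₂ - sX / r) := mul_pos hsX (sub_pos.2 hsX_div)
  have hQ : 1 < Q := by
    rw [hQ_def, one_lt_div hden]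
    nlinarith [div_pos hsX hr₀]
  have hsqrtQ : 1 < √Q := Real.lt_sqrt_of_sq_lt (by rwa [one_pow])
  have hα : 0 < (√Q - 1)⁻¹ := inv_pos.2 (sub_pos.2 hsqrtQ)
  refine isGreatest_feasible hsX hsZ hD₂.le hα h1 h2 h3 ?_
  have hQden : Q * (sX * (D₂ - sX / r)) = sZ * (sX - D₂) := div_mul_cancel₀ _ hden.ne'
  rw [one_add_inv_sqrt_sub_one_sq (by positivity) hsqrtQ.ne', ← hQden]
  field_simp

/-- Theorem 2, Case 2 of the cascade Gaussian optimization. -/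
theorem cascade_gaussian_case2 (sX sZ D₂ r : ℝ)
    (hsX : 0 < sX) (hsZ : 0 < sZ) (hD₂ : 0 < D₂) (hr : 1 < r)
    (h1 : D₂ * (sX + sZ) ≤ sX * sZ)
    (h2 : sX < r * D₂)
    (h3 : r * D₂ * (sX * sZ - D₂ * sZ - D₂ * sX) ≤ sX * sZ * (sX - D₂)) :
    IsGreatest (feasible sX sZ D₂ r)
      (sZ * sX * ((Real.sqrt (sZ * (sX - D₂) / (sX * (D₂ - sX / r))) - 1)⁻¹) ^ 2
        / (r * D₂ - sX)) :=
  cascade_gaussian_case2_general sX sZ D₂ r hsX hsZ hr h1 h2 h3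
end

section
/- (Theorem 2, Case 3 of the cascade Gaussian optimization.) Assume D₂·(sX + sZ) ≥ sX·sZ, D₂ < sX, sX ≤ r·D₂, and r·(sX·D₂ + sZ·D₂ − sX·sZ) ≥ sX². Then the feasible set F is not bounded above: for every M : ℝ there exists s ∈ F with s > M. -/
noncomputable def rateBoundary (sX sZ r α : ℝ) : ℝ :=
  ((1 + α) ^ 2 * sX + α ^ 2 * sZ) / (r - 1)

section

variable {sX sZ D₂ r : ℝ}

lemma sub_one_mul_rateBoundary (hr : 1 < r) (α : ℝ) :
    (r - 1) * rateBoundary sX sZ r α = (1 + α) ^ 2 * sX + α ^ 2 * sZ :=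
  mul_div_cancel₀ _ (sub_pos.mpr hr).ne'

lemma distortion_slack_eq (α : ℝ) :
    (r - 1) * (α ^ 2 * (sX * D₂ + sZ * D₂ - sX * sZ) + 2 * α * sX * D₂ + D₂ * sX)
        - ((1 + α) ^ 2 * sX + α ^ 2 * sZ) * (sX - D₂)
      = α ^ 2 * (r * (sX * D₂ + sZ * D₂ - sX * sZ) - sX ^ 2)
        + 2 * α * sX * (r * D₂ - sX) + sX * (r * D₂ - sX) := by
  ring

lemma lt_rateBoundary (hsX : 0 < sX) (hsZ : 0 ≤ sZ) (hr : 1 < r) {α : ℝ} (hα : 0 ≤ α) :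
    α * sX / (r - 1) < rateBoundary sX sZ r α := by
  have hr1 : 0 < r - 1 := sub_pos.mpr hr
  rw [rateBoundary, div_lt_div_iff_of_pos_right hr1]
  have : α < (1 + α) ^ 2 := by nlinarith
  nlinarith [mul_lt_mul_of_pos_right this hsX, mul_nonneg (sq_nonneg α) hsZ]

lemma rateBoundary_mem_feasible (hsX : 0 < sX) (hsZ : 0 ≤ sZ) (hr : 1 < r)
    (hD : sX ≤ r * D₂) (hK : r * (sX * D₂ + sZ * D₂ - sX * sZ) ≥ sX ^ 2)
    {α : ℝ} (hα : 0 ≤ α) :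
    rateBoundary sX sZ r α ∈ feasible sX sZ D₂ r := by
  have hr1 : 0 < r - 1 := sub_pos.mpr hr
  have hslack : 0 ≤ α ^ 2 * (r * (sX * D₂ + sZ * D₂ - sX * sZ) - sX ^ 2)
      + 2 * α * sX * (r * D₂ - sX) + sX * (r * D₂ - sX) := by
    have := sub_nonneg.mpr hD
    have := sub_nonneg.mpr hK
    positivity
  refine ⟨(div_nonneg (mul_nonneg hα hsX.le) hr1.le).trans_lt (lt_rateBoundary hsX hsZ hr hα),
    α, (sub_one_mul_rateBoundary hr α).ge, ?_⟩
  refine le_of_mul_le_mul_left ?_ hr1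
  rw [← mul_assoc, sub_one_mul_rateBoundary hr]
  linarith [distortion_slack_eq (sX := sX) (sZ := sZ) (D₂ := D₂) (r := r) α]

end

theorem cascade_gaussian_case3_general (sX sZ D₂ r : ℝ)
    (hsX : 0 < sX) (hsZ : 0 < sZ) (hr : 1 < r)
    (h3 : sX ≤ r * D₂)
    (h4 : r * (sX * D₂ + sZ * D₂ - sX * sZ) ≥ sX ^ 2) :
    ∀ M : ℝ, ∃ s ∈ feasible sX sZ D₂ r, s > M := by
  intro M
  set α := |M| * (r - 1) / sX with hα_def
  have hα : 0 ≤ α := by have := sub_pos.mpr hr; positivity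
  refine ⟨rateBoundary sX sZ r α, rateBoundary_mem_feasible hsX hsZ.le hr h3 h4 hα, ?_⟩
  calc M ≤ |M| := le_abs_self M
    _ = α * sX / (r - 1) := by
      rw [hα_def, div_mul_cancel₀ _ hsX.ne', mul_div_cancel_right₀ _ (sub_pos.mpr hr).ne']
    _ < rateBoundary sX sZ r α := lt_rateBoundary hsX hsZ.le hr hα

/-- Theorem 2, Case 3 of the cascade Gaussian optimization: the feasible set is
unbounded above. -/
theorem cascade_gaussian_case3 (sX sZ D₂ r : ℝ)
    (hsX : 0 < sX) (hsZ : 0 < sZ) (hD₂ : 0 < D₂) (hr : 1 < r)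
    (h1 : D₂ * (sX + sZ) ≥ sX * sZ)
    (h2 : D₂ < sX)
    (h3 : sX ≤ r * D₂)
    (h4 : r * (sX * D₂ + sZ * D₂ - sX * sZ) ≥ sX ^ 2) :
    ∀ M : ℝ, ∃ s ∈ feasible sX sZ D₂ r, s > M :=
  cascade_gaussian_case3_general sX sZ D₂ r hsX hsZ hr h3 h4
end

section
/- (Theorem 2, Case 4 of the cascade Gaussian optimization.) Assume D₂·(sX + sZ) ≥ sX·sZ, D₂ < sX, sX < r·D₂, and r·(sX·D₂ + sZ·D₂ − sX·sZ) < sX². Then, setting α := ( √( sZ·(sX − D₂) / (sX·(D₂ − sX/r)) ) − 1 )⁻¹, the number s* := sZ·sX·α² / (r·D₂ − sX) is the greatest element of the feasible set F, i.e. IsGreatest F s*. -/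
/-!
For fixed `α` the two constraints pin `s` between
`(sX (1+α)² + sZ α²) / (r-1)` and `(D₂ sX (1+α)² - sZ (sX-D₂) α²) / (sX-D₂)`.
The optimal `α = a` makes both tight at once, which happens exactly when
`sX (r D₂ - sX) (1+a)² = r sZ (sX - D₂) a²`, i.e. `(1+a)/a = √q` for the `q` of the statement;
the common value is `s* = sZ sX a² / (r D₂ - sX)`.
Optimality is a Lagrangian certificate: a combination of the two constraints, with weights that are
nonnegative because `D₂ (sX+sZ) ≥ sX sZ`, shows that `s* - s` dominates a multiple of `(α - a)²`.
-/
theorem sq_one_add_inv_sqrt_sub_one {q : ℝ} (hq : 1 < q) :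
    (1 + (√q - 1)⁻¹) ^ 2 = q * (√q - 1)⁻¹ ^ 2 := by
  have hu : 1 < √q := by simpa using Real.sqrt_lt_sqrt zero_le_one hq
  have hu2 : √q ^ 2 = q := Real.sq_sqrt (by linarith)
  have hne : √q - 1 ≠ 0 := by linarith
  field_simp
  rw [sub_add_cancel, hu2]

section Feasible

variable {sX sZ D₂ r a s : ℝ}

theorem mem_feasible_of_sq_eq (hsX : 0 < sX) (hsZ : 0 < sZ) (hW : 0 < r * D₂ - sX)
    (ha : 0 < a) (hrel : sX * (r * D₂ - sX) * (1 + a) ^ 2 = r * sZ * (sX - D₂) * a ^ 2) :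
    sZ * sX * a ^ 2 / (r * D₂ - sX) ∈ feasible sX sZ D₂ r := by
  refine ⟨by positivity, a, le_of_eq ?_, le_of_eq ?_⟩
  · field_simp
    linear_combination hrel
  · field_simp
    linear_combination -D₂ * hrel

theorem le_of_mem_feasible_s3 (hsX : 0 < sX) (hsZ : 0 < sZ) (hD₂ : 0 < D₂)
    (hD₂sZ : sZ * (sX - D₂) ≤ sX * D₂) (hW : 0 < r * D₂ - sX) (ha : 0 < a)
    (hrel : sX * (r * D₂ - sX) * (1 + a) ^ 2 = r * sZ * (sX - D₂) * a ^ 2)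
    (hs : s ∈ feasible sX sZ D₂ r) :
    s ≤ sZ * sX * a ^ 2 / (r * D₂ - sX) := by
  obtain ⟨-, α, hA, hB⟩ := hs
  have hwB : 0 ≤ sX * (1 + a) + sZ * a := by positivity
  have hwA : 0 ≤ sX * D₂ * (1 + a) - sZ * (sX - D₂) * a := by
    nlinarith [mul_nonneg ha.le (sub_nonneg.2 hD₂sZ), mul_pos hsX hD₂]
  have certificate :
      a * (sX * (1 + a) + sZ * a) *
          (α ^ 2 * (sX * D₂ + sZ * D₂ - sX * sZ) + 2 * α * sX * D₂ + D₂ * sX - s * (sX - D₂)) +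
        a * (sX * D₂ * (1 + a) - sZ * (sX - D₂) * a) *
          ((r - 1) * s - ((1 + α) ^ 2 * sX + α ^ 2 * sZ)) =
      sX * (1 + a) * (sZ * sX * a ^ 2 - s * (r * D₂ - sX)) - a * sZ * sX ^ 2 * (α - a) ^ 2 := by
    linear_combination s * hrel
  have hcomb : 0 ≤ sX * (1 + a) * (sZ * sX * a ^ 2 - s * (r * D₂ - sX)) := by
    have h₁ := mul_nonneg (mul_nonneg ha.le hwB) (sub_nonneg.2 hB)
    have h₂ := mul_nonneg (mul_nonneg ha.le hwA) (sub_nonneg.2 hA)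
    have h₃ : 0 ≤ a * sZ * sX ^ 2 * (α - a) ^ 2 := by positivity
    linarith
  rw [le_div_iff₀ hW]
  linarith [(mul_nonneg_iff_of_pos_left (by positivity : 0 < sX * (1 + a))).1 hcomb]

theorem isGreatest_feasible_of_sq_eq (hsX : 0 < sX) (hsZ : 0 < sZ) (hD₂ : 0 < D₂)
    (hD₂sZ : sZ * (sX - D₂) ≤ sX * D₂) (hW : 0 < r * D₂ - sX) (ha : 0 < a)
    (hrel : sX * (r * D₂ - sX) * (1 + a) ^ 2 = r * sZ * (sX - D₂) * a ^ 2) :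
    IsGreatest (feasible sX sZ D₂ r) (sZ * sX * a ^ 2 / (r * D₂ - sX)) :=
  ⟨mem_feasible_of_sq_eq hsX hsZ hW ha hrel,
    fun _ hs ↦ le_of_mem_feasible_s3 hsX hsZ hD₂ hD₂sZ hW ha hrel hs⟩

end Feasible

theorem cascade_gaussian_case4_general (sX sZ D₂ r : ℝ)
    (hsX : 0 < sX) (hsZ : 0 < sZ) (hD₂ : 0 < D₂) (hr : 1 < r)
    (h1 : D₂ * (sX + sZ) ≥ sX * sZ)
    (h3 : sX < r * D₂)
    (h4 : r * (sX * D₂ + sZ * D₂ - sX * sZ) < sX ^ 2) :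
    IsGreatest (feasible sX sZ D₂ r)
      (sZ * sX * ((Real.sqrt (sZ * (sX - D₂) / (sX * (D₂ - sX / r))) - 1)⁻¹) ^ 2
        / (r * D₂ - sX)) := by
  set q := sZ * (sX - D₂) / (sX * (D₂ - sX / r)) with hq
  have hr₀ : 0 < r := by linarith
  have hW : 0 < r * D₂ - sX := by linarith
  have hq_mul : sX * (r * D₂ - sX) * q = r * sZ * (sX - D₂) := by
    rw [hq]
    field_simp [hW.ne']
  have hq₁ : 1 < q := by
    have hd : 0 < D₂ - sX / r := by
      rw [sub_pos, div_lt_iff₀ hr₀]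
      linarith
    rw [hq, one_lt_div (by positivity)]
    field_simp
    linarith
  have ha : 0 < (√q - 1)⁻¹ :=
    inv_pos.2 (sub_pos.2 ((Real.lt_sqrt zero_le_one).2 (by simpa using hq₁)))
  refine isGreatest_feasible_of_sq_eq hsX hsZ hD₂ (by linarith) hW ha ?_
  rw [sq_one_add_inv_sqrt_sub_one hq₁, ← hq_mul]
  ring

/-- Theorem 2, Case 4 of the cascade Gaussian optimization. -/
theorem cascade_gaussian_case4 (sX sZ D₂ r : ℝ)
    (hsX : 0 < sX) (hsZ : 0 < sZ) (hD₂ : 0 < D₂) (hr : 1 < r)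
    (h1 : D₂ * (sX + sZ) ≥ sX * sZ)
    (h2 : D₂ < sX)
    (h3 : sX < r * D₂)
    (h4 : r * (sX * D₂ + sZ * D₂ - sX * sZ) < sX ^ 2) :
    IsGreatest (feasible sX sZ D₂ r)
      (sZ * sX * ((Real.sqrt (sZ * (sX - D₂) / (sX * (D₂ - sX / r))) - 1)⁻¹) ^ 2
        / (r * D₂ - sX)) :=
  cascade_gaussian_case4_general sX sZ D₂ r hsX hsZ hD₂ hr h1 h3 h4
end

section
/- (Theorem 2, minimal rate R₁ in Case 1.) Assume D₂·(sX + sZ) < sX·sZ and r·D₂·(sX·sZ − D₂·sZ − D₂·sX) ≥ sX·sZ·(sX − D₂). Then the minimum of R₁(s) over s ∈ F exists and equals (1/2)·max(log(h / D₂), log(h / D₁)); that is, IsLeast {ρ : ℝ | ∃ s ∈ F, ρ = R₁(s)} ((1/2)·max(log(h / D₂), log(h / D₁))). -/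
/-- The conditional variance σ²_{X|Y}. -/
noncomputable def condVar (sX sZ : ℝ) : ℝ := sX * sZ / (sX + sZ)

/-- The conditional variance σ²_{X|W,Y} as a function of s = σ²_{Z₂}. -/
noncomputable def vWY (sX sZ s : ℝ) : ℝ := (1 / s + 1 / sX + 1 / sZ)⁻¹

/-- The rate R₁ as a function of s = σ²_{Z₂}. -/
noncomputable def rateR1 (sX sZ D₁ s : ℝ) : ℝ :=
  (1 / 2) * max (Real.log (condVar sX sZ / vWY sX sZ s))
    (max (Real.log (condVar sX sZ / D₁)) 0)

/-!
Maximising the distortion constraint's right-hand side over `α` shows that every feasible `s`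
is at most `s* = D₂ sX sZ / (sX sZ - D₂ sX - D₂ sZ)`, the value at which `σ²_{X|W,Y} = D₂`;
`s*` is itself feasible (the rate hypothesis is exactly the rate constraint at the optimal `α`).
Since `σ²_{X|W,Y}` increases with `s`, the rate `R₁` decreases with `s`, so its minimum over the
feasible set is attained at `s*`, where the first term `log (h / D₂) ≥ 0` absorbs the `0`.
-/

noncomputable def maxFeasible (sX sZ D₂ : ℝ) : ℝ :=
  D₂ * sX * sZ / (sX * sZ - D₂ * sX - D₂ * sZ)

section

variable {sX sZ D₂ : ℝ}

lemma vWY_mono {s t : ℝ} (hsX : 0 < sX) (hsZ : 0 < sZ) (hs : 0 < s) (hst : s ≤ t) :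
    vWY sX sZ s ≤ vWY sX sZ t :=
  inv_anti₀ (by have := hs.trans_le hst; positivity) (by gcongr)

lemma vWY_pos {s : ℝ} (hsX : 0 < sX) (hsZ : 0 < sZ) (hs : 0 < s) : 0 < vWY sX sZ s := by
  unfold vWY; positivity

lemma rateR1_antitoneOn (D₁ : ℝ) (hsX : 0 < sX) (hsZ : 0 < sZ) :
    AntitoneOn (rateR1 sX sZ D₁) (Set.Ioi 0) := by
  intro s hs t _ hst
  have hh : 0 < condVar sX sZ := by unfold condVar; positivity
  have hvs := vWY_pos hsX hsZ hs
  have hvt := vWY_pos hsX hsZ (hs.trans_le hst)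
  unfold rateR1
  gcongr
  exact vWY_mono hsX hsZ hs hst

variable (hsX : 0 < sX) (hsZ : 0 < sZ) (hD₂ : 0 < D₂) (h1 : D₂ * (sX + sZ) < sX * sZ)
include hsX hsZ hD₂ h1

lemma maxFeasible_pos : 0 < maxFeasible sX sZ D₂ := by
  unfold maxFeasible
  exact div_pos (by positivity) (by linarith)

lemma vWY_maxFeasible : vWY sX sZ (maxFeasible sX sZ D₂) = D₂ := by
  have hE : sX * sZ - D₂ * sX - D₂ * sZ ≠ 0 := by linarith
  rw [vWY, maxFeasible, inv_eq_iff_eq_inv]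
  field_simp
  ring

lemma le_maxFeasible_of_mem_feasible {r s : ℝ} (hs : s ∈ feasible sX sZ D₂ r) :
    s ≤ maxFeasible sX sZ D₂ := by
  obtain ⟨-, α, -, hdist⟩ := hs
  have hE : 0 < sX * sZ - D₂ * sX - D₂ * sZ := by linarith
  have hsXD : 0 < sX - D₂ := by nlinarith
  -- the quadratic in `α` peaks at `α = sX D₂ / E` with value `D₂ sX sZ (sX - D₂) / E`
  have hpeak : s * (sX * sZ - D₂ * sX - D₂ * sZ) * (sX - D₂) ≤ D₂ * sX * sZ * (sX - D₂) := by
    nlinarith [mul_le_mul_of_nonneg_right hdist hE.le,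
      sq_nonneg ((sX * sZ - D₂ * sX - D₂ * sZ) * α - sX * D₂)]
  rw [maxFeasible, le_div_iff₀ hE]
  exact le_of_mul_le_mul_right hpeak hsXD

lemma maxFeasible_mem_feasible {r : ℝ}
    (h2 : r * D₂ * (sX * sZ - D₂ * sZ - D₂ * sX) ≥ sX * sZ * (sX - D₂)) :
    maxFeasible sX sZ D₂ ∈ feasible sX sZ D₂ r := by
  set E := sX * sZ - D₂ * sX - D₂ * sZ with hE_def
  have hE : 0 < E := by linarith
  refine ⟨maxFeasible_pos hsX hsZ hD₂ h1, sX * D₂ / E, ?_, le_of_eq ?_⟩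
  · have hrate : (r - 1) * maxFeasible sX sZ D₂ -
          ((1 + sX * D₂ / E) ^ 2 * sX + (sX * D₂ / E) ^ 2 * sZ) =
        sX * sZ * (r * D₂ * (sX * sZ - D₂ * sZ - D₂ * sX) - sX * sZ * (sX - D₂)) / E ^ 2 := by
      rw [maxFeasible, ← hE_def]
      field_simp
      ring
    rw [ge_iff_le, ← sub_nonneg, hrate]
    exact div_nonneg (mul_nonneg (by positivity) (sub_nonneg.2 h2)) (sq_nonneg E)
  · rw [maxFeasible, ← hE_def]
    field_simp
    ring

lemma isGreatest_maxFeasible {r : ℝ}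
    (h2 : r * D₂ * (sX * sZ - D₂ * sZ - D₂ * sX) ≥ sX * sZ * (sX - D₂)) :
    IsGreatest (feasible sX sZ D₂ r) (maxFeasible sX sZ D₂) :=
  ⟨maxFeasible_mem_feasible hsX hsZ hD₂ h1 h2,
    fun _ hs => le_maxFeasible_of_mem_feasible hsX hsZ hD₂ h1 hs⟩

lemma rateR1_maxFeasible (D₁ : ℝ) :
    rateR1 sX sZ D₁ (maxFeasible sX sZ D₂) =
      (1 / 2) * max (Real.log (condVar sX sZ / D₂)) (Real.log (condVar sX sZ / D₁)) := by
  have hlog : 0 ≤ Real.log (condVar sX sZ / D₂) := by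
    refine Real.log_nonneg ?_
    rw [condVar, le_div_iff₀ hD₂, le_div_iff₀ (by positivity)]
    linarith
  rw [rateR1, vWY_maxFeasible hsX hsZ hD₂ h1, ← max_assoc,
    max_eq_left (hlog.trans (le_max_left _ _))]

end

theorem cascade_gaussian_rate_case1_general (sX sZ D₂ r D₁ : ℝ)
    (hsX : 0 < sX) (hsZ : 0 < sZ) (hD₂ : 0 < D₂)
    (h1 : D₂ * (sX + sZ) < sX * sZ)
    (h2 : r * D₂ * (sX * sZ - D₂ * sZ - D₂ * sX) ≥ sX * sZ * (sX - D₂)) :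
    IsLeast {ρ : ℝ | ∃ s ∈ feasible sX sZ D₂ r, ρ = rateR1 sX sZ D₁ s}
      ((1 / 2) * max (Real.log (condVar sX sZ / D₂)) (Real.log (condVar sX sZ / D₁))) := by
  have hmin := ((rateR1_antitoneOn D₁ hsX hsZ).mono fun _ hs => hs.1).map_isGreatest
    (isGreatest_maxFeasible hsX hsZ hD₂ h1 h2)
  rw [rateR1_maxFeasible hsX hsZ hD₂ h1] at hmin
  simpa only [Set.image, eq_comm] using hmin

/-- Theorem 2, minimal rate R₁ in Case 1. -/
theorem cascade_gaussian_rate_case1 (sX sZ D₂ r D₁ : ℝ)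
    (hsX : 0 < sX) (hsZ : 0 < sZ) (hD₂ : 0 < D₂) (hr : 1 < r) (hD₁ : 0 < D₁)
    (h1 : D₂ * (sX + sZ) < sX * sZ)
    (h2 : r * D₂ * (sX * sZ - D₂ * sZ - D₂ * sX) ≥ sX * sZ * (sX - D₂)) :
    IsLeast {ρ : ℝ | ∃ s ∈ feasible sX sZ D₂ r, ρ = rateR1 sX sZ D₁ s}
      ((1 / 2) * max (Real.log (condVar sX sZ / D₂)) (Real.log (condVar sX sZ / D₁))) :=
  cascade_gaussian_rate_case1_general sX sZ D₂ r D₁ hsX hsZ hD₂ h1 h2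
end

section
/- (Theorem 2, minimal rate R₁ in Case 3.) Assume D₂·(sX + sZ) ≥ sX·sZ, D₂ < sX, sX ≤ r·D₂, and r·(sX·D₂ + sZ·D₂ − sX·sZ) ≥ sX². Then the infimum of R₁(s) over s ∈ F equals (1/2)·max(log(h / D₁), 0); that is, sInf {ρ : ℝ | ∃ s ∈ F, ρ = R₁(s)} = (1/2)·max(log(h / D₁), 0). -/
/-! Solving the second constraint with equality for `s` gives, for every `α ≥ 0`, a feasible
point, and these points are unbounded. Since `σ²_{X|Y} / σ²_{X|W,Y} = 1 + σ²_{X|Y} / s`, the first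
term of the maximum in `R₁` tends to `0` as `s → ∞`, so along the feasible set `R₁` tends to
`(1/2) max (log (σ²_{X|Y} / D₁), 0)`, which is also a lower bound for it. -/

open Filter Topology Real

theorem csInf_image_eq_of_tendsto {α β : Type*} [ConditionallyCompleteLinearOrder β]
    [TopologicalSpace β] [OrderTopology β] {f : α → β} {S : Set α} {l : Filter α} {L : β}
    (hS : ∃ᶠ x in l, x ∈ S) (hle : ∀ x ∈ S, L ≤ f x) (hf : Tendsto f l (𝓝 L)) :
    sInf (f '' S) = L := by
  have : (l ⊓ 𝓟 S).NeBot := frequently_iff_neBot.1 hS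
  have hbdd : BddBelow (f '' S) := ⟨L, Set.forall_mem_image.2 hle⟩
  refine le_antisymm ?_ (le_csInf (Set.Nonempty.image f hS.exists) (Set.forall_mem_image.2 hle))
  exact ge_of_tendsto (hf.mono_left (inf_le_left (b := 𝓟 S)))
    (eventually_inf_principal.2 (Eventually.of_forall fun x hx => csInf_le hbdd ⟨x, hx, rfl⟩))

section Feasible

variable {sX sZ D₂ r : ℝ}

theorem sX_mul_D₂_add_sZ_mul_D₂_sub_pos (hsX : 0 < sX) (hD₂ : 0 < D₂) (h3 : sX ≤ r * D₂)
    (h4 : r * (sX * D₂ + sZ * D₂ - sX * sZ) ≥ sX ^ 2) : 0 < sX * D₂ + sZ * D₂ - sX * sZ :=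
  pos_of_mul_pos_right (lt_of_lt_of_le (by positivity) h4)
    (pos_of_mul_pos_left (hsX.trans_le h3) hD₂.le).le

theorem mem_feasible_of_nonneg (hsX : 0 < sX) (hD₂ : 0 < D₂) (h2 : D₂ < sX)
    (h3 : sX ≤ r * D₂) (h4 : r * (sX * D₂ + sZ * D₂ - sX * sZ) ≥ sX ^ 2) {α : ℝ} (hα : 0 ≤ α) :
    (α ^ 2 * (sX * D₂ + sZ * D₂ - sX * sZ) + 2 * α * sX * D₂ + D₂ * sX) / (sX - D₂)
      ∈ feasible sX sZ D₂ r := by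
  set A := sX * D₂ + sZ * D₂ - sX * sZ
  have hd : 0 < sX - D₂ := by linarith
  have hA : 0 < A := sX_mul_D₂_add_sZ_mul_D₂_sub_pos hsX hD₂ h3 h4
  refine ⟨by positivity, α, ?_, (div_mul_cancel₀ _ hd.ne').le⟩
  rw [ge_iff_le, ← mul_div_assoc, le_div_iff₀ hd]
  -- coefficientwise in `α`: `h4` for `α²`, `h3` for `α` and `1`
  nlinarith [mul_nonneg (mul_nonneg (sub_nonneg.2 h3) hα) hsX.le,
    mul_nonneg (sub_nonneg.2 h4) (sq_nonneg α)]

theorem frequently_atTop_mem_feasible (hsX : 0 < sX) (hD₂ : 0 < D₂) (h2 : D₂ < sX)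
    (h3 : sX ≤ r * D₂) (h4 : r * (sX * D₂ + sZ * D₂ - sX * sZ) ≥ sX ^ 2) :
    ∃ᶠ s in atTop, s ∈ feasible sX sZ D₂ r := by
  set A := sX * D₂ + sZ * D₂ - sX * sZ
  have hd : 0 < sX - D₂ := by linarith
  have hc : 0 < 2 * sX * D₂ / (sX - D₂) := by positivity
  have hA : 0 < A := sX_mul_D₂_add_sZ_mul_D₂_sub_pos hsX hD₂ h3 h4
  have hlin : Tendsto (fun α : ℝ => (α ^ 2 * A + 2 * α * sX * D₂ + D₂ * sX) / (sX - D₂))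
      atTop atTop := by
    refine tendsto_atTop_mono' _ ((eventually_ge_atTop 0).mono fun α hα => ?_)
      (tendsto_id.atTop_mul_const hc)
    rw [id, mul_div_assoc', div_le_div_iff_of_pos_right hd]
    nlinarith [mul_nonneg (sq_nonneg α) hA.le, mul_pos hsX hD₂]
  exact hlin.frequently ((eventually_ge_atTop 0).mono
    fun α hα => mem_feasible_of_nonneg hsX hD₂ h2 h3 h4 hα).frequently

end Feasible

section Rate

variable {sX sZ : ℝ}

theorem condVar_div_vWY (hsX : 0 < sX) (hsZ : 0 < sZ) (s : ℝ) :
    condVar sX sZ / vWY sX sZ s = 1 + condVar sX sZ / s := by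
  unfold condVar vWY
  rw [div_inv_eq_mul]
  field_simp
  ring

theorem half_max_le_rateR1 (D₁ s : ℝ) :
    (1 / 2) * max (log (condVar sX sZ / D₁)) 0 ≤ rateR1 sX sZ D₁ s :=
  mul_le_mul_of_nonneg_left (le_max_right _ _) (by norm_num)

theorem tendsto_rateR1_atTop (hsX : 0 < sX) (hsZ : 0 < sZ) (D₁ : ℝ) :
    Tendsto (rateR1 sX sZ D₁) atTop (𝓝 ((1 / 2) * max (log (condVar sX sZ / D₁)) 0)) := by
  have hlog : Tendsto (fun s => log (condVar sX sZ / vWY sX sZ s)) atTop (𝓝 0) := by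
    simp_rw [condVar_div_vWY hsX hsZ]
    have := ((tendsto_const_nhds (x := condVar sX sZ)).div_atTop tendsto_id).const_add 1
    simpa using this.log (by norm_num)
  have := (hlog.max (tendsto_const_nhds (x := max (log (condVar sX sZ / D₁)) 0))).const_mul
    (1 / 2 : ℝ)
  rwa [max_eq_right (le_max_right _ _)] at this

end Rate

theorem cascade_gaussian_rate_case3_general (sX sZ D₂ r D₁ : ℝ)
    (hsX : 0 < sX) (hsZ : 0 < sZ) (hD₂ : 0 < D₂)
    (h2 : D₂ < sX)
    (h3 : sX ≤ r * D₂)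
    (h4 : r * (sX * D₂ + sZ * D₂ - sX * sZ) ≥ sX ^ 2) :
    sInf {ρ : ℝ | ∃ s ∈ feasible sX sZ D₂ r, ρ = rateR1 sX sZ D₁ s}
      = (1 / 2) * max (Real.log (condVar sX sZ / D₁)) 0 := by
  have himage : {ρ : ℝ | ∃ s ∈ feasible sX sZ D₂ r, ρ = rateR1 sX sZ D₁ s}
      = rateR1 sX sZ D₁ '' feasible sX sZ D₂ r := by
    ext; simp [eq_comm]
  rw [himage]
  exact csInf_image_eq_of_tendsto (frequently_atTop_mem_feasible hsX hD₂ h2 h3 h4)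
    (fun s _ => half_max_le_rateR1 D₁ s) (tendsto_rateR1_atTop hsX hsZ D₁)

/-- Theorem 2, minimal rate R₁ in Case 3. -/
theorem cascade_gaussian_rate_case3 (sX sZ D₂ r D₁ : ℝ)
    (hsX : 0 < sX) (hsZ : 0 < sZ) (hD₂ : 0 < D₂) (hr : 1 < r) (hD₁ : 0 < D₁)
    (h1 : D₂ * (sX + sZ) ≥ sX * sZ)
    (h2 : D₂ < sX)
    (h3 : sX ≤ r * D₂)
    (h4 : r * (sX * D₂ + sZ * D₂ - sX * sZ) ≥ sX ^ 2) :
    sInf {ρ : ℝ | ∃ s ∈ feasible sX sZ D₂ r, ρ = rateR1 sX sZ D₁ s}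
      = (1 / 2) * max (Real.log (condVar sX sZ / D₁)) 0 :=
  cascade_gaussian_rate_case3_general sX sZ D₂ r D₁ hsX hsZ hD₂ h2 h3 h4
end

section
/- (Lemma 2.) Let n : ℕ and let S₁, S₂ ⊆ ℝⁿ be closed sets, each contained in the nonnegative orthant {x : ℝⁿ | 0 ≤ x}, and each upward closed. If Par(S₁) = Par(S₂), then S₁ = S₂. -/
/-!
If `S` is closed and bounded below, `S ∩ Iic p` is compact, and a minimiser of the (strictly
monotone) coordinate sum over it is Pareto-minimal in `S`. So every point of `S` lies above the
Pareto frontier, and an upward closed such `S` is the upper closure of its frontier.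
-/

/-- The Pareto frontier of a set `S` in `Fin n → ℝ` (componentwise order):
the set of Pareto-minimal points, i.e. points of `S` not strictly dominated by
any other point of `S`. -/
def paretoFrontier {n : ℕ} (S : Set (Fin n → ℝ)) : Set (Fin n → ℝ) :=
  {p | p ∈ S ∧ ¬ ∃ q ∈ S, q ≤ p ∧ q ≠ p}

section Minimal

variable {α β : Type*} [PartialOrder α]

theorem IsMinOn.minimal_of_strictMono [Preorder β] {f : α → β} (hf : StrictMono f)
    {s : Set α} {q : α} (hq : q ∈ s) (hmin : IsMinOn f s q) : Minimal (· ∈ s) q :=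
  minimal_iff_forall_lt.2 ⟨hq, fun _ hyq hy => (hf hyq).not_ge (hmin hy)⟩

theorem exists_minimal_le_of_isCompact_inter_Iic [TopologicalSpace α] [LinearOrder β]
    [TopologicalSpace β] [ClosedIicTopology β] {f : α → β} (hf : StrictMono f)
    (hfc : Continuous f) {s : Set α} {p : α} (hp : p ∈ s) (hs : IsCompact (s ∩ Set.Iic p)) :
    ∃ q, Minimal (· ∈ s) q ∧ q ≤ p := by
  obtain ⟨q, ⟨hqs, hqp⟩, hmin⟩ := hs.exists_isMinOn ⟨p, hp, le_rfl⟩ hfc.continuousOn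
  have hq : Minimal (· ∈ s ∩ Set.Iic p) q := hmin.minimal_of_strictMono hf ⟨hqs, hqp⟩
  exact ⟨q, ⟨hqs, fun y hy hyq => hq.2 ⟨hy, hyq.trans hqp⟩ hyq⟩, hqp⟩

end Minimal

theorem mem_paretoFrontier_iff_minimal {n : ℕ} {S : Set (Fin n → ℝ)} {p : Fin n → ℝ} :
    p ∈ paretoFrontier S ↔ Minimal (· ∈ S) p := by
  simp only [paretoFrontier, minimal_iff_forall_lt, lt_iff_le_and_ne, Set.mem_ofPred_eq]
  refine and_congr_right fun _ => ⟨fun h y ⟨hyp, hne⟩ hy => h ⟨y, hy, hyp, hne⟩, ?_⟩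
  rintro h ⟨y, hy, hyp, hne⟩
  exact h ⟨hyp, hne⟩ hy

theorem exists_mem_paretoFrontier_le {n : ℕ} {S : Set (Fin n → ℝ)} (hc : IsClosed S)
    (hb : BddBelow S) {p : Fin n → ℝ} (hp : p ∈ S) : ∃ q ∈ paretoFrontier S, q ≤ p := by
  obtain ⟨a, ha⟩ := hb
  have hcompact : IsCompact (S ∩ Set.Iic p) :=
    isCompact_Icc.of_isClosed_subset (hc.inter isClosed_Iic) fun x hx => ⟨ha hx.1, hx.2⟩
  obtain ⟨q, hq, hqp⟩ := exists_minimal_le_of_isCompact_inter_Iic Fintype.sum_strictMono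
    (continuous_finsetSum _ fun i _ => continuous_apply i) hp hcompact
  exact ⟨q, mem_paretoFrontier_iff_minimal.2 hq, hqp⟩

theorem upperClosure_paretoFrontier {n : ℕ} {S : Set (Fin n → ℝ)} (hc : IsClosed S)
    (hb : BddBelow S) (hu : IsUpperSet S) : (upperClosure (paretoFrontier S) : Set _) = S := by
  ext p
  exact ⟨fun ⟨q, hq, hqp⟩ => hu hqp hq.1, exists_mem_paretoFrontier_le hc hb⟩

/-- Lemma 2: two closed, upward-closed subsets of the nonnegative orthant with the
same Pareto frontier are identical. -/
theorem eq_of_paretoFrontier_eq (n : ℕ) (S₁ S₂ : Set (Fin n → ℝ))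
    (hc₁ : IsClosed S₁) (hc₂ : IsClosed S₂)
    (hn₁ : S₁ ⊆ {x : Fin n → ℝ | 0 ≤ x}) (hn₂ : S₂ ⊆ {x : Fin n → ℝ | 0 ≤ x})
    (hu₁ : ∀ x ∈ S₁, ∀ z, x ≤ z → z ∈ S₁)
    (hu₂ : ∀ x ∈ S₂, ∀ z, x ≤ z → z ∈ S₂)
    (hpar : paretoFrontier S₁ = paretoFrontier S₂) :
    S₁ = S₂ := by
  rw [← upperClosure_paretoFrontier hc₁ ⟨0, hn₁⟩ fun x z hxz hx => hu₁ x hx z hxz,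
    ← upperClosure_paretoFrontier hc₂ ⟨0, hn₂⟩ fun x z hxz hx => hu₂ x hx z hxz, hpar]
end
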